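/- arXiv:2201.07546 — 7 statements merged into one kernel-verified Lean document; each statement's English description precedes it below -/
import Mathlib

section
/- For every n ≥ 1 there exists a PB instance E with N = n+2 voters such that sequential PAV selects a bundle with social welfare 2 and representation 2, while there exists a feasible bundle with social welfare n and representation n; hence the utilitarian and representation ratios of sequential PAV on E are both 2/n. -/
/-- The k-th harmonic number. -/
noncomputable def harm (k : ℕ) : ℝ := ∑ i ∈ Finset.range k, (1 : ℝ) / (i + 1)

/-- PAV score of a bundle. -/
noncomputable def pavScore {N M : ℕ} (A : Fin N → Finset (Fin M))
    (B : Finset (Fin M)) : ℝ := ∑ i, harm ((A i ∩ B).card)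

/-- Feasibility of a bundle with respect to a cost function and a budget. -/
def feas {M : ℕ} (cost : Fin M → ℝ) (L : ℝ) (B : Finset (Fin M)) : Prop :=
  ∑ p ∈ B, cost p ≤ L

/-- One greedy step of sequential PAV: add a feasible project maximizing the
resulting PAV score. -/
def spavStep {N M : ℕ} (A : Fin N → Finset (Fin M)) (cost : Fin M → ℝ)
    (L : ℝ) (B B' : Finset (Fin M)) : Prop :=
  ∃ p, p ∉ B ∧ feas cost L (insert p B) ∧
    (∀ q, q ∉ B → feas cost L (insert q B) →
      pavScore A (insert q B) ≤ pavScore A (insert p B)) ∧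
    B' = insert p B

/-- `B` is an outcome of sequential PAV: reachable from `∅` by greedy steps,
and no further project can feasibly be added. -/
def isSPAV {N M : ℕ} (A : Fin N → Finset (Fin M)) (cost : Fin M → ℝ)
    (L : ℝ) (B : Finset (Fin M)) : Prop :=
  Relation.ReflTransGen (spavStep A cost L) ∅ B ∧
    ∀ p, p ∉ B → ¬ feas cost L (insert p B)

/-- Social welfare. -/
def SWr {N M : ℕ} (A : Fin N → Finset (Fin M)) (B : Finset (Fin M)) : ℝ :=
  ∑ i, ((A i ∩ B).card : ℝ)

/-- Representation. -/
def RPr {N M : ℕ} (A : Fin N → Finset (Fin M)) (B : Finset (Fin M)) : ℝ :=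
  ∑ i, min 1 ((A i ∩ B).card : ℝ)


noncomputable def exCost (n : ℕ) : Fin (n+1) → ℝ := fun p => if p = 0 then 1 else 1/n

def exA (n : ℕ) : Fin (n+2) → Finset (Fin (n+1)) :=
  fun i => if i.val ≤ 1 then {0} else {⟨i.val - 1, by have := i.isLt; omega⟩}

lemma exA_card (n : ℕ) (i : Fin (n+2)) : (exA n i).card = 1 := by
  unfold exA; split <;> simp

lemma inter_card_le (n : ℕ) (B : Finset (Fin (n+1))) (i : Fin (n+2)) :
    ((exA n i) ∩ B).card ≤ 1 := by
  calc ((exA n i) ∩ B).card ≤ (exA n i).card :=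
        Finset.card_le_card Finset.inter_subset_left
    _ = 1 := exA_card n i

lemma harm_le_one (c : ℕ) (hc : c ≤ 1) : harm c = c := by
  interval_cases c <;> simp [harm]

lemma pav_eq_SWr (n : ℕ) (B : Finset (Fin (n+1))) :
    pavScore (exA n) B = SWr (exA n) B := by
  unfold pavScore SWr
  refine Finset.sum_congr rfl fun i _ => ?_
  exact harm_le_one _ (inter_card_le n B i)

lemma RPr_eq_SWr (n : ℕ) (B : Finset (Fin (n+1))) :
    RPr (exA n) B = SWr (exA n) B := by
  unfold RPr SWr
  refine Finset.sum_congr rfl fun i _ => ?_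
  have h := inter_card_le n B i
  interval_cases h' : ((exA n i) ∩ B).card <;> simp

lemma SWr_zero (n : ℕ) : SWr (exA n) {0} = 2 := by
  unfold SWr
  rw [Fin.sum_univ_succ, Fin.sum_univ_succ]
  have h0 : exA n 0 = {0} := by simp [exA]
  have h1 : exA n ((0 : Fin (n+1)).succ) = {0} := by simp [exA]
  have ht : ∀ i : Fin n, (exA n i.succ.succ ∩ {0} : Finset (Fin (n+1))).card = 0 := by
    intro i
    have : exA n i.succ.succ = {(⟨i.val + 1, by have := i.isLt; omega⟩ : Fin (n+1))} := by
      simp [exA, Fin.ext_iff]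
    rw [this, Finset.singleton_inter_of_notMem] <;> simp [Fin.ext_iff]
  rw [h0, h1]
  simp [ht]
  norm_num

lemma SWr_single (n : ℕ) (p : Fin (n+1)) (hp : p ≠ 0) : SWr (exA n) {p} = 1 := by
  have hp1 : 1 ≤ p.val := by
    rcases Nat.eq_zero_or_pos p.val with h | h
    · exact absurd (Fin.ext h) hp
    · exact h
  have hpn : p.val - 1 < n := by have := p.isLt; omega
  unfold SWr
  rw [Fin.sum_univ_succ, Fin.sum_univ_succ]
  have h0 : ((exA n 0 ∩ {p} : Finset (Fin (n+1)))).card = 0 := by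
    have : exA n 0 = {0} := by simp [exA]
    rw [this, Finset.singleton_inter_of_notMem] <;> simp [hp.symm]
  have h1 : ((exA n ((0 : Fin (n+1)).succ) ∩ {p} : Finset (Fin (n+1)))).card = 0 := by
    have : exA n ((0 : Fin (n+1)).succ) = {0} := by simp [exA]
    rw [this, Finset.singleton_inter_of_notMem] <;> simp [hp.symm]
  have ht : ∀ i : Fin n, ((exA n i.succ.succ ∩ {p} : Finset (Fin (n+1)))).card
      = if i = (⟨p.val - 1, hpn⟩ : Fin n) then 1 else 0 := by
    intro i
    have hA : exA n i.succ.succ = {(⟨i.val + 1, by have := i.isLt; omega⟩ : Fin (n+1))} := by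
      simp [exA, Fin.ext_iff]
    rw [hA]
    by_cases h : i = (⟨p.val - 1, hpn⟩ : Fin n)
    · subst h
      have : (⟨p.val - 1 + 1, by omega⟩ : Fin (n+1)) = p := by
        simp [Fin.ext_iff]; omega
      simp [this]
    · rw [Finset.singleton_inter_of_notMem]
      · simp [h]
      · simp only [Finset.mem_singleton, Fin.ext_iff] at h ⊢
        omega
  rw [h0, h1]
  push_cast [ht]
  rw [Finset.sum_ite_eq' Finset.univ (⟨p.val - 1, hpn⟩ : Fin n) (fun _ => (1:ℝ))]
  simp

lemma SWr_big (n : ℕ) : SWr (exA n) (Finset.univ.erase 0) = n := by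
  unfold SWr
  rw [Fin.sum_univ_succ, Fin.sum_univ_succ]
  have h0 : ((exA n 0 ∩ Finset.univ.erase 0 : Finset (Fin (n+1)))).card = 0 := by
    have : exA n 0 = {0} := by simp [exA]
    rw [this, Finset.singleton_inter_of_notMem]; · simp
    · simp
  have h1 : ((exA n ((0 : Fin (n+1)).succ) ∩ Finset.univ.erase 0 : Finset (Fin (n+1)))).card = 0 := by
    have : exA n ((0 : Fin (n+1)).succ) = {0} := by simp [exA]
    rw [this, Finset.singleton_inter_of_notMem]; · simp
    · simp
  have ht : ∀ i : Fin n, ((exA n i.succ.succ ∩ Finset.univ.erase 0 : Finset (Fin (n+1)))).card = 1 := by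
    intro i
    have hA : exA n i.succ.succ = {(⟨i.val + 1, by have := i.isLt; omega⟩ : Fin (n+1))} := by
      simp [exA, Fin.ext_iff]
    rw [hA, Finset.singleton_inter_of_mem]
    · simp
    · simp [Fin.ext_iff]
  rw [h0, h1]
  simp [ht]

lemma spav_outcome (n : ℕ) (hn : 1 ≤ n) (B : Finset (Fin (n+1)))
    (hB : isSPAV (exA n) (exCost n) 1 B) : B = {0} := by
  have hnpos : (0:ℝ) < 1/n := by positivity
  have hfeas0 : feas (exCost n) 1 (insert (0 : Fin (n+1)) ∅) := by
    simp [feas, exCost]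
  have hnostep : ∀ q : Fin (n+1), q ∉ ({0} : Finset (Fin (n+1))) →
      ¬ feas (exCost n) 1 (insert q {0}) := by
    intro q hq hf
    simp only [Finset.mem_singleton] at hq
    unfold feas at hf
    have h0 : exCost n 0 = 1 := by simp [exCost]
    have hqc : exCost n q = 1/n := by simp [exCost, hq]
    rw [Finset.sum_insert (by simpa using hq), Finset.sum_singleton, h0, hqc] at hf
    linarith
  obtain ⟨hR, hmax⟩ := hB
  rcases hR.cases_head with h | ⟨c, hstep, hR'⟩
  · subst h
    exact absurd hfeas0 (hmax 0 (Finset.notMem_empty _))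
  · obtain ⟨p, -, hf, hbest, rfl⟩ := hstep
    have hp0 : p = 0 := by
      by_contra hp
      have := hbest 0 (Finset.notMem_empty _) hfeas0
      have e1 : insert (0 : Fin (n+1)) ∅ = ({0} : Finset (Fin (n+1))) := by simp
      have e2 : insert p (∅ : Finset (Fin (n+1))) = {p} := by simp
      rw [e1, e2, pav_eq_SWr, pav_eq_SWr, SWr_zero, SWr_single n p hp] at this
      linarith
    subst hp0
    have e1 : insert (0 : Fin (n+1)) ∅ = ({0} : Finset (Fin (n+1))) := by simp
    rw [e1] at hR'
    rcases hR'.cases_head with h | ⟨c, hstep, -⟩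
    · exact h.symm
    · obtain ⟨q, hq, hf', -, -⟩ := hstep
      exact absurd hf' (hnostep q hq)

/-- For every `n ≥ 1` there is a PB instance with `n + 2` voters on which any
sequential PAV outcome has welfare 2 and representation 2, while some feasible
bundle has welfare `n` and representation `n`; hence both ratios equal `2/n`. -/
theorem stmt6 (n : ℕ) (hn : 1 ≤ n) :
    ∃ (M : ℕ) (cost : Fin M → ℝ) (L : ℝ) (A : Fin (n + 2) → Finset (Fin M)),
      0 < L ∧
      (∀ B, isSPAV A cost L B → SWr A B = 2 ∧ RPr A B = 2) ∧
      (∃ B', feas cost L B' ∧ SWr A B' = n ∧ RPr A B' = n) ∧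
      (∀ B B', isSPAV A cost L B → feas cost L B' → SWr A B' = n →
        SWr A B / SWr A B' = 2 / n ∧ RPr A B / RPr A B' = 2 / n)  := by
  have hn0 : (n:ℝ) ≠ 0 := by positivity
  refine ⟨n+1, exCost n, 1, exA n, one_pos, ?_, ?_, ?_⟩
  · intro B hB
    rw [spav_outcome n hn B hB, RPr_eq_SWr, SWr_zero]
    norm_num
  · refine ⟨Finset.univ.erase 0, ?_, SWr_big n, by rw [RPr_eq_SWr]; exact SWr_big n⟩
    unfold feas
    have : ∀ p ∈ (Finset.univ.erase 0 : Finset (Fin (n+1))), exCost n p = 1/n := by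
      intro p hp
      simp only [Finset.mem_erase] at hp
      simp [exCost, hp.1]
    rw [Finset.sum_congr rfl this, Finset.sum_const,
      Finset.card_erase_of_mem (Finset.mem_univ _)]
    simp only [Finset.card_univ, Fintype.card_fin, Nat.add_sub_cancel, nsmul_eq_mul]
    rw [mul_one_div, div_self hn0]
  · intro B B' hB hf hsw
    have h2 : SWr (exA n) B = 2 := by rw [spav_outcome n hn B hB, SWr_zero]
    constructor
    · rw [h2, hsw]
    · rw [RPr_eq_SWr, RPr_eq_SWr, h2, hsw]
end

section
/- Let E be a PB instance with budget L and minimum cost c_min, and let B_CC be a bundle maximizing representation over feasible bundles. Then SW(A, B_CC) ≥ (c_min/L) · max_{feasible B} SW(A, B). That is, the utilitarian guarantee of the Chamberlin–Courant rule is at least c_min/L. -/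
/-- A bundle maximizing representation over feasible bundles has social
welfare at least a `cmin/L` fraction of the welfare of any feasible bundle:
the utilitarian guarantee of Chamberlin–Courant is at least `cmin/L`. -/
theorem stmt7 (N M : ℕ) (A : Fin N → Finset (Fin M)) (cost : Fin M → ℝ)
    (L cmin : ℝ) (hL : 0 < L) (hcmin : 0 < cmin)
    (hmin : ∀ p, cmin ≤ cost p)
    (BCC : Finset (Fin M)) (hfCC : ∑ p ∈ BCC, cost p ≤ L)
    (hmax : ∀ B : Finset (Fin M), (∑ p ∈ B, cost p ≤ L) →
      RPr A B ≤ RPr A BCC)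
    (B : Finset (Fin M)) (hfB : ∑ p ∈ B, cost p ≤ L) :
    SWr A BCC ≥ (cmin / L) * SWr A B := by
  have hBcard : (B.card : ℝ) ≤ L / cmin := by
    rw [le_div_iff₀ hcmin] at *
    calc (B.card : ℝ) * cmin = ∑ _p ∈ B, cmin := by
          rw [Finset.sum_const, nsmul_eq_mul]
      _ ≤ ∑ p ∈ B, cost p := Finset.sum_le_sum fun p _ => hmin p
      _ ≤ L := hfB
  have h1 : SWr A B ≤ (L / cmin) * RPr A B := by
    unfold SWr RPr
    rw [Finset.mul_sum]
    refine Finset.sum_le_sum fun i _ => ?_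
    rcases Nat.eq_zero_or_pos (A i ∩ B).card with h | h
    · simp [h]
    · have h1' : min 1 ((A i ∩ B).card : ℝ) = 1 := by
        have : (1:ℝ) ≤ (A i ∩ B).card := by exact_mod_cast h
        simp [min_eq_left this]
      rw [h1', mul_one]
      calc ((A i ∩ B).card : ℝ) ≤ B.card := by
            exact_mod_cast Finset.card_le_card (Finset.inter_subset_right)
        _ ≤ L / cmin := hBcard
  have h2 : RPr A B ≤ RPr A BCC := hmax B hfB
  have h3 : RPr A BCC ≤ SWr A BCC := by
    unfold SWr RPr
    refine Finset.sum_le_sum fun i _ => min_le_of_right_le le_rfl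
  have hpos : 0 < cmin / L := div_pos hcmin hL
  have : (cmin / L) * SWr A B ≤ (cmin / L) * ((L / cmin) * RPr A B) :=
    mul_le_mul_of_nonneg_left h1 hpos.le
  calc (cmin / L) * SWr A B ≤ (cmin / L) * ((L / cmin) * RPr A B) := this
    _ = RPr A B := by field_simp
    _ ≤ SWr A BCC := le_trans h2 h3
end

section
/- For every n ≥ 2 there exists a PB instance in which the Chamberlin–Courant optimal bundle has social welfare at most 2n − 1/n while the maximum social welfare is n²; consequently the utilitarian ratio of CC on this instance is at most 2/n, which is at most 2·c_min/(L − c_min) where c_min = L/(n+1). -/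
namespace Stmt8Aux

/-- The "big" projects, each approved by all of the first `n` voters. -/
def Big (n : ℕ) : Finset (Fin (2*n+1)) := Finset.univ.filter (fun p => p.val < n)

/-- Approval profile. -/
def Aex (n : ℕ) : Fin (2*n+1) → Finset (Fin (2*n+1)) :=
  fun i => if i.val < n then Big n else {i}

/-- Cost function. -/
noncomputable def costex (n : ℕ) (L : ℝ) : Fin (2*n+1) → ℝ :=
  fun p => if p.val < n then L/n else L/(n+1)

lemma card_big (n : ℕ) :
    (Finset.univ.filter (fun p : Fin (2*n+1) => p.val < n)).card = n := by
  have h : ∀ m ∈ Finset.range n, m < 2*n+1 := by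
    intro m hm; simp only [Finset.mem_range] at hm; omega
  have : (Finset.univ.filter (fun p : Fin (2*n+1) => p.val < n))
      = (Finset.range n).attachFin h := by
    ext p; simp [Finset.mem_attachFin]
  rw [this, Finset.card_attachFin, Finset.card_range]

lemma card_small (n : ℕ) :
    (Finset.univ.filter (fun p : Fin (2*n+1) => ¬ p.val < n)).card = n+1 := by
  have := Finset.card_filter_add_card_filter_not
    (s := (Finset.univ : Finset (Fin (2*n+1)))) (p := fun p => p.val < n)
  rw [card_big] at this
  simp only [Finset.card_univ, Fintype.card_fin] at this
  omega

lemma big_inter (n : ℕ) (B : Finset (Fin (2*n+1))) :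
    Big n ∩ B = B.filter (fun p => p.val < n) := by
  ext p
  simp only [Big, Finset.mem_inter, Finset.mem_filter, Finset.mem_univ, true_and, and_comm]

lemma small_sum (n : ℕ) (B : Finset (Fin (2*n+1))) :
    ∑ i ∈ Finset.univ.filter (fun i : Fin (2*n+1) => ¬ i.val < n), (({i} ∩ B).card : ℝ)
      = ((B.filter (fun p => ¬ p.val < n)).card : ℝ) := by
  have h1 : ∀ i ∈ Finset.univ.filter (fun i : Fin (2*n+1) => ¬ i.val < n),
      (({i} ∩ B).card : ℝ) = if i ∈ B then (1:ℝ) else 0 := by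
    intro i _
    by_cases h : i ∈ B <;> simp [Finset.singleton_inter, h]
  rw [Finset.sum_congr rfl h1, Finset.sum_ite_mem, Finset.sum_const, nsmul_eq_mul, mul_one]
  have h2 : Finset.univ.filter (fun i : Fin (2*n+1) => ¬ i.val < n) ∩ B
      = B.filter (fun p => ¬ p.val < n) := by
    ext p
    simp only [Finset.mem_inter, Finset.mem_filter, Finset.mem_univ, true_and, and_comm]
  rw [h2]

lemma small_min (n : ℕ) (B : Finset (Fin (2*n+1))) (i : Fin (2*n+1)) :
    min 1 ((({i} : Finset (Fin (2*n+1))) ∩ B).card : ℝ) = (({i} ∩ B).card : ℝ) := by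
  by_cases h : i ∈ B <;> simp [Finset.singleton_inter, h]

lemma swr_eq (n : ℕ) (B : Finset (Fin (2*n+1))) :
    SWr (Aex n) B = n * ((B.filter (fun p => p.val < n)).card : ℝ)
      + ((B.filter (fun p => ¬ p.val < n)).card : ℝ) := by
  unfold SWr
  rw [← Finset.sum_filter_add_sum_filter_not Finset.univ (fun i : Fin (2*n+1) => i.val < n)]
  congr 1
  · have h1 : ∀ i ∈ Finset.univ.filter (fun i : Fin (2*n+1) => i.val < n),
        ((Aex n i ∩ B).card : ℝ) = ((B.filter (fun p => p.val < n)).card : ℝ) := by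
      intro i hi
      simp only [Finset.mem_filter] at hi
      rw [Aex, if_pos hi.2, big_inter]
    rw [Finset.sum_congr rfl h1, Finset.sum_const, card_big, nsmul_eq_mul]
  · have h1 : ∀ i ∈ Finset.univ.filter (fun i : Fin (2*n+1) => ¬ i.val < n),
        ((Aex n i ∩ B).card : ℝ) = (({i} ∩ B).card : ℝ) := by
      intro i hi
      simp only [Finset.mem_filter] at hi
      rw [Aex, if_neg hi.2]
    rw [Finset.sum_congr rfl h1, small_sum]

lemma rpr_eq (n : ℕ) (B : Finset (Fin (2*n+1))) :
    RPr (Aex n) B = n * min 1 ((B.filter (fun p => p.val < n)).card : ℝ)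
      + ((B.filter (fun p => ¬ p.val < n)).card : ℝ) := by
  unfold RPr
  rw [← Finset.sum_filter_add_sum_filter_not Finset.univ (fun i : Fin (2*n+1) => i.val < n)]
  congr 1
  · have h1 : ∀ i ∈ Finset.univ.filter (fun i : Fin (2*n+1) => i.val < n),
        min 1 ((Aex n i ∩ B).card : ℝ)
          = min 1 ((B.filter (fun p => p.val < n)).card : ℝ) := by
      intro i hi
      simp only [Finset.mem_filter] at hi
      rw [Aex, if_pos hi.2, big_inter]
    rw [Finset.sum_congr rfl h1, Finset.sum_const, card_big, nsmul_eq_mul]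
  · have h1 : ∀ i ∈ Finset.univ.filter (fun i : Fin (2*n+1) => ¬ i.val < n),
        min 1 ((Aex n i ∩ B).card : ℝ) = (({i} ∩ B).card : ℝ) := by
      intro i hi
      simp only [Finset.mem_filter] at hi
      rw [Aex, if_neg hi.2, small_min]
    rw [Finset.sum_congr rfl h1, small_sum]

lemma cost_eq (n : ℕ) (L : ℝ) (B : Finset (Fin (2*n+1))) :
    ∑ p ∈ B, costex n L p = ((B.filter (fun p => p.val < n)).card : ℝ) * (L/n)
      + ((B.filter (fun p => ¬ p.val < n)).card : ℝ) * (L/(n+1)) := by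
  rw [← Finset.sum_filter_add_sum_filter_not B (fun p : Fin (2*n+1) => p.val < n)]
  congr 1
  · rw [Finset.sum_congr rfl (fun p hp => ?_), Finset.sum_const, nsmul_eq_mul]
    simp only [Finset.mem_filter] at hp
    simp [costex, hp.2]
  · rw [Finset.sum_congr rfl (fun p hp => ?_), Finset.sum_const, nsmul_eq_mul]
    simp only [Finset.mem_filter] at hp
    simp [costex, hp.2]

end Stmt8Aux

open Stmt8Aux

set_option maxHeartbeats 800000 in
/-- For every `n ≥ 2` and budget `L > 0` there is a PB instance (with `2n+1`
voters and `2n+1` projects) in which every representation-maximizing feasible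
bundle has welfare at most `2n - 1/n`, the maximum welfare is `n²`, and hence
the utilitarian ratio of CC is at most `2/n ≤ 2·cmin/(L - cmin)` where
`cmin = L/(n+1)`. -/
theorem stmt8 (n : ℕ) (hn : 2 ≤ n) (L : ℝ) (hL : 0 < L) :
    ∃ (A : Fin (2 * n + 1) → Finset (Fin (2 * n + 1)))
      (cost : Fin (2 * n + 1) → ℝ),
      (∀ BCC, feas cost L BCC →
        (∀ B, feas cost L B → RPr A B ≤ RPr A BCC) →
        SWr A BCC ≤ 2 * n - 1 / n) ∧
      (∃ B, feas cost L B ∧ SWr A B = (n : ℝ) ^ 2) ∧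
      (∀ B, feas cost L B → SWr A B ≤ (n : ℝ) ^ 2) ∧
      (∀ BCC, feas cost L BCC →
        (∀ B, feas cost L B → RPr A B ≤ RPr A BCC) →
        SWr A BCC / (n : ℝ) ^ 2 ≤ 2 / n) ∧
      (2 / (n : ℝ) ≤ 2 * (L / (n + 1)) / (L - L / (n + 1))) := by
  classical
  have hnn : 0 < n := by omega
  have hn0 : (0:ℝ) < n := by exact_mod_cast hnn
  have hn1 : (0:ℝ) < (n:ℝ) + 1 := by linarith
  have hnR : (2:ℝ) ≤ n := by exact_mod_cast hn
  have hinv : (1/(n:ℝ)) * n = 1 := by field_simp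
  -- feasibility in cleared-denominator form
  have hfeasC : ∀ B : Finset (Fin (2*n+1)), feas (costex n L) L B →
      ((B.filter (fun p => p.val < n)).card : ℝ) * ((n:ℝ)+1)
        + ((B.filter (fun p => ¬ p.val < n)).card : ℝ) * n ≤ n * ((n:ℝ)+1) := by
    intro B hB
    rw [feas, cost_eq] at hB
    set b := ((B.filter (fun p => p.val < n)).card : ℝ) with hbdef
    set s := ((B.filter (fun p => ¬ p.val < n)).card : ℝ) with hsdef
    have h' : b * L * ((n:ℝ)+1) + s * L * n ≤ L * ((n:ℝ) * ((n:ℝ)+1)) := by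
      have hmul := mul_le_mul_of_nonneg_right hB (le_of_lt (mul_pos hn0 hn1))
      calc b * L * ((n:ℝ)+1) + s * L * n
          = (b * (L/(n:ℝ)) + s * (L/((n:ℝ)+1))) * ((n:ℝ) * ((n:ℝ)+1)) := by
            field_simp
        _ ≤ L * ((n:ℝ) * ((n:ℝ)+1)) := hmul
    by_contra hcon
    push_neg at hcon
    nlinarith [mul_lt_mul_of_pos_left hcon hL]
  -- cardinality bound for the small part
  have hs_le : ∀ B : Finset (Fin (2*n+1)),
      ((B.filter (fun p => ¬ p.val < n)).card : ℝ) ≤ (n:ℝ) + 1 := by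
    intro B
    have h1 : (B.filter (fun p => ¬ p.val < n)).card ≤ n + 1 := by
      have := Finset.card_le_card
        (Finset.filter_subset_filter (fun p : Fin (2*n+1) => ¬ p.val < n)
          (Finset.subset_univ B))
      rwa [card_small] at this
    exact_mod_cast h1
  -- the CC witness bundle
  set Bstar : Finset (Fin (2*n+1)) :=
    Finset.univ.filter (fun p => p.val = 0 ∨ (n ≤ p.val ∧ p.val < 2*n - 1)) with hBstar
  have hbstar : Bstar.filter (fun p => p.val < n) = {(⟨0, by omega⟩ : Fin (2*n+1))} := by
    ext p
    simp only [hBstar, Finset.mem_filter, Finset.mem_univ, true_and,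
      Finset.mem_singleton, Fin.ext_iff]
    omega
  have hsstar : (Bstar.filter (fun p => ¬ p.val < n)).card = n - 1 := by
    have hco : ∀ m ∈ Finset.Ico n (2*n-1), m < 2*n+1 := by
      intro m hm; simp only [Finset.mem_Ico] at hm; omega
    have heq : Bstar.filter (fun p => ¬ p.val < n) = (Finset.Ico n (2*n-1)).attachFin hco := by
      ext p
      simp only [hBstar, Finset.mem_filter, Finset.mem_univ, true_and,
        Finset.mem_attachFin, Finset.mem_Ico]
      omega
    rw [heq, Finset.card_attachFin, Nat.card_Ico]
    omega
  have hcastn1 : ((n - 1 : ℕ) : ℝ) = (n:ℝ) - 1 := by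
    have : (1:ℕ) ≤ n := by omega
    push_cast [this]
    ring
  have hfeasStar : feas (costex n L) L Bstar := by
    rw [feas, cost_eq, hbstar, hsstar, Finset.card_singleton, hcastn1]
    have h2 : ((n:ℝ) - 1) * (L / ((n:ℝ)+1)) = (((n:ℝ)-1) * L) / ((n:ℝ)+1) := by
      rw [mul_div_assoc]
    rw [Nat.cast_one, one_mul, h2, div_add_div _ _ (ne_of_gt hn0) (ne_of_gt hn1),
      div_le_iff₀ (mul_pos hn0 hn1)]
    nlinarith [mul_le_mul_of_nonneg_left hnR hL.le]
  have hRstar : RPr (Aex n) Bstar = 2 * (n:ℝ) - 1 := by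
    rw [rpr_eq, hbstar, hsstar, Finset.card_singleton, hcastn1, Nat.cast_one]
    norm_num
    ring
  -- the key CC welfare bound
  have hCC : ∀ BCC, feas (costex n L) L BCC →
      (∀ B, feas (costex n L) L B → RPr (Aex n) B ≤ RPr (Aex n) BCC) →
      SWr (Aex n) BCC ≤ 2 * (n:ℝ) - 1 / n := by
    intro BCC hfe hopt
    have hRopt : 2 * (n:ℝ) - 1 ≤ RPr (Aex n) BCC := by
      rw [← hRstar]; exact hopt Bstar hfeasStar
    have hC := hfeasC BCC hfe
    have hsB := hs_le BCC
    rw [rpr_eq] at hRopt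
    rw [swr_eq]
    set bN := (BCC.filter (fun p => p.val < n)).card with hbN
    set sN := (BCC.filter (fun p => ¬ p.val < n)).card with hsN
    rcases Nat.eq_zero_or_pos bN with hb0 | hb1
    · rw [hb0] at hRopt ⊢
      simp only [Nat.cast_zero, min_comm, min_zero, mul_zero, zero_add] at hRopt ⊢
      have h1n : (1:ℝ)/n ≤ 1 := by rw [div_le_one hn0]; linarith
      linarith
    · have hb1R : (1:ℝ) ≤ (bN:ℝ) := by exact_mod_cast hb1
      rw [min_eq_left hb1R] at hRopt
      have hsge : (n:ℝ) - 1 ≤ (sN:ℝ) := by linarith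
      -- show bN = 1
      have hblt : (bN:ℝ) < 2 := by nlinarith
      have hbeq : bN = 1 := by
        have : bN < 2 := by exact_mod_cast hblt
        omega
      rw [hbeq] at hC ⊢
      rw [Nat.cast_one] at hC ⊢
      have h1 : (sN:ℝ) * n ≤ (n:ℝ)^2 - 1 := by nlinarith
      have hgoal : ((n:ℝ) * 1 + sN) * n ≤ (2 * (n:ℝ) - 1 / n) * n := by
        nlinarith [h1, hinv]
      exact le_of_mul_le_mul_right hgoal hn0
  refine ⟨Aex n, costex n L, hCC, ?_, ?_, ?_, ?_⟩
  · -- welfare-optimal bundle Big n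
    refine ⟨Big n, ?_, ?_⟩
    · rw [feas, cost_eq]
      have h1 : (Big n).filter (fun p => p.val < n) = Big n := by
        apply Finset.filter_true_of_mem
        intro p hp
        simp only [Big, Finset.mem_filter, Finset.mem_univ, true_and] at hp
        exact hp
      have h2 : (Big n).filter (fun p => ¬ p.val < n) = ∅ := by
        apply Finset.filter_false_of_mem
        intro p hp
        simp only [Big, Finset.mem_filter, Finset.mem_univ, true_and] at hp
        omega
      rw [h1, h2]
      simp only [Finset.card_empty, Nat.cast_zero, zero_mul, add_zero]
      rw [show ((Big n).card : ℝ) = (n:ℝ) by exact_mod_cast card_big n]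
      rw [mul_div_cancel₀ _ (ne_of_gt hn0)]
    · rw [swr_eq]
      have h1 : (Big n).filter (fun p => p.val < n) = Big n := by
        apply Finset.filter_true_of_mem
        intro p hp
        simp only [Big, Finset.mem_filter, Finset.mem_univ, true_and] at hp
        exact hp
      have h2 : (Big n).filter (fun p => ¬ p.val < n) = ∅ := by
        apply Finset.filter_false_of_mem
        intro p hp
        simp only [Big, Finset.mem_filter, Finset.mem_univ, true_and] at hp
        omega
      rw [h1, h2]
      simp only [Finset.card_empty, Nat.cast_zero, add_zero]
      rw [show ((Big n).card : ℝ) = (n:ℝ) by exact_mod_cast card_big n]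
      ring
  · -- upper bound on welfare
    intro B hB
    have hC := hfeasC B hB
    rw [swr_eq]
    set b := ((B.filter (fun p => p.val < n)).card : ℝ) with hbdef
    set s := ((B.filter (fun p => ¬ p.val < n)).card : ℝ) with hsdef
    have hb0 : (0:ℝ) ≤ b := hbdef ▸ Nat.cast_nonneg _
    have hs0 : (0:ℝ) ≤ s := hsdef ▸ Nat.cast_nonneg _
    have h2 : (0:ℝ) ≤ (n:ℝ)^2 - n - 1 := by nlinarith [hnR]
    have P := mul_le_mul_of_nonneg_right hC hn0.le
    have Q := mul_nonneg hs0 h2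
    have R : ((n:ℝ) * b + s) * ((n:ℝ) + 1) ≤ (n:ℝ)^2 * ((n:ℝ) + 1) := by nlinarith [P, Q]
    exact le_of_mul_le_mul_right R hn1
  · -- ratio bound
    intro BCC hfe hopt
    have h := hCC BCC hfe hopt
    set S := SWr (Aex n) BCC with hS
    rw [div_le_div_iff₀ (by positivity) hn0]
    have h2 : S * n ≤ (2 * (n:ℝ) - 1 / n) * n := mul_le_mul_of_nonneg_right h hn0.le
    nlinarith [h2, hinv]
  · -- last inequality
    have hden : L - L/((n:ℝ)+1) = L * n / ((n:ℝ)+1) := by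
      field_simp
      ring
    rw [hden, div_le_div_iff₀ hn0 (by positivity)]
    exact le_of_eq (by ring)
end

section
/- For every integer x ≥ 2 there exists a PB instance with budget L, minimum cost c_min = L/x, and ⌊log(x)⌋ + 3 voters, such that the PAV-optimal bundle has social welfare ⌊log(x)⌋ + 2 while the maximum social welfare is x = L/c_min; hence the utilitarian ratio of PAV is at most (c_min/L)·(log(L/c_min) + 2). -/
lemma harm_eq (k : ℕ) : harm k = (harmonic k : ℝ) := by
  simp [harm, harmonic, one_div]

lemma harm_nonneg (k : ℕ) : 0 ≤ harm k :=
  Finset.sum_nonneg fun i _ => by positivity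

lemma harm_mono {a b : ℕ} (h : a ≤ b) : harm a ≤ harm b :=
  Finset.sum_le_sum_of_subset_of_nonneg (Finset.range_subset_range.mpr h)
    (fun i _ _ => by positivity)

lemma harm_one : harm 1 = 1 := by simp [harm]

/-- For every `x ≥ 2` and budget `L > 0` there is a PB instance with `x + 1`
projects, minimum cost `cmin = L/x` and `⌊log x⌋ + 3` voters, in which some
PAV-optimal feasible bundle has welfare `⌊log x⌋ + 2` while the maximum
welfare is `x = L/cmin`; hence the utilitarian ratio of PAV is at most
`(cmin/L)·(log(L/cmin) + 2)`. -/
theorem stmt9 (x : ℕ) (hx : 2 ≤ x) (L : ℝ) (hL : 0 < L) :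
    ∃ (cost : Fin (x + 1) → ℝ)
      (A : Fin (Nat.floor (Real.log x) + 3) → Finset (Fin (x + 1))),
      (∀ p, L / x ≤ cost p) ∧
      (∃ BPAV, feas cost L BPAV ∧
        (∀ B, feas cost L B → pavScore A B ≤ pavScore A BPAV) ∧
        SWr A BPAV = (Nat.floor (Real.log x) : ℝ) + 2) ∧
      (∃ B, feas cost L B ∧ SWr A B = (x : ℝ)) ∧
      (∀ B, feas cost L B → SWr A B ≤ (x : ℝ)) ∧
      ((Nat.floor (Real.log x) + 2 : ℝ) / x ≤
        ((L / x) / L) * (Real.log (L / (L / x)) + 2)) := by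
  set m := Nat.floor (Real.log x) with hm
  have hx0 : (0 : ℝ) < x := by exact_mod_cast Nat.lt_of_lt_of_le Nat.zero_lt_two hx
  have hx1 : (1 : ℝ) ≤ x := by exact_mod_cast Nat.one_le_of_lt hx
  have hlog0 : (0 : ℝ) ≤ Real.log x := Real.log_nonneg hx1
  have hcmin : (0 : ℝ) < L / x := div_pos hL hx0
  set last : Fin (x + 1) := Fin.last x with hlast
  set S : Finset (Fin (x + 1)) := Finset.univ.erase last with hS
  have hScard : S.card = x := by
    simp [hS, Finset.card_erase_of_mem]
  set cost : Fin (x + 1) → ℝ := fun p => if p = last then L else L / x with hcost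
  set A : Fin (m + 3) → Finset (Fin (x + 1)) :=
    fun i => if i = 0 then S else {last} with hA
  refine ⟨cost, A, ?_, ?_, ?_, ?_, ?_⟩
  · intro p
    by_cases h : p = last <;> simp [hcost, h]
    exact div_le_self hL.le hx1
  · -- PAV-optimal bundle {last}
    refine ⟨{last}, ?_, ?_, ?_⟩
    · simp [feas, hcost]
    · intro B hB
      have hscore_last : pavScore A {last} = (m : ℝ) + 2 := by
        unfold pavScore
        rw [Fin.sum_univ_succ]
        have h0 : A 0 ∩ ({last} : Finset (Fin (x + 1))) = ∅ := by
          simp [hA, hS, Finset.eq_empty_iff_forall_notMem]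
        have h1 : ∀ i : Fin (m + 2), A i.succ = {last} := by
          intro i; simp [hA, Fin.succ_ne_zero]
        simp only [h0, Finset.card_empty]
        rw [Finset.sum_congr rfl (fun i _ => by rw [h1 i])]
        simp [harm, Finset.inter_self]
      rw [hscore_last]
      by_cases hlB : last ∈ B
      · -- B = {last}
        have hB' : B = {last} := by
          by_contra hne
          have : ∃ q ∈ B, q ≠ last := by
            by_contra hq
            push_neg at hq
            exact hne (Finset.eq_singleton_iff_unique_mem.mpr ⟨hlB, hq⟩)
          obtain ⟨q, hqB, hq⟩ := this
          have hqe : q ∈ B.erase last := Finset.mem_erase.mpr ⟨hq, hqB⟩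
          have hsum : cost last + ∑ p ∈ B.erase last, cost p = ∑ p ∈ B, cost p :=
            Finset.add_sum_erase B cost hlB
          have hpos : 0 < ∑ p ∈ B.erase last, cost p := by
            refine Finset.sum_pos' (fun p hp => ?_) ⟨q, hqe, ?_⟩
            · rw [hcost]; dsimp only; split_ifs
              exacts [hL.le, hcmin.le]
            · simpa [hcost, hq] using hcmin
          have : L < ∑ p ∈ B, cost p := by
            rw [← hsum]
            have : cost last = L := by simp [hcost]
            linarith
          exact absurd hB (not_le.mpr this)
        rw [hB', hscore_last]
      · -- last ∉ B : score = harm |S ∩ B| ≤ harm x ≤ 1 + log x ≤ m + 2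
        have hscore : pavScore A B = harm ((S ∩ B).card) := by
          unfold pavScore
          rw [Fin.sum_univ_succ]
          have h1 : ∀ i : Fin (m + 2), (A i.succ ∩ B).card = 0 := by
            intro i
            simp [hA, Fin.succ_ne_zero, Finset.card_eq_zero,
              Finset.singleton_inter_of_notMem hlB]
          rw [Finset.sum_congr rfl (fun i _ => by rw [h1 i])]
          simp [hA, harm]
        rw [hscore]
        have hc : (S ∩ B).card ≤ x := by
          calc (S ∩ B).card ≤ S.card := Finset.card_le_card (Finset.inter_subset_left)
          _ = x := hScard
        calc harm ((S ∩ B).card) ≤ harm x := harm_mono hc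
          _ ≤ 1 + Real.log x := by rw [harm_eq]; exact harmonic_le_one_add_log x
          _ ≤ (m : ℝ) + 2 := by
              have := Nat.lt_floor_add_one (Real.log x)
              linarith
    · -- welfare of {last}
      unfold SWr
      rw [Fin.sum_univ_succ]
      have h0 : A 0 ∩ ({last} : Finset (Fin (x + 1))) = ∅ := by
        simp [hA, hS, Finset.eq_empty_iff_forall_notMem]
      have h1 : ∀ i : Fin (m + 2), A i.succ = {last} := by
        intro i; simp [hA, Fin.succ_ne_zero]
      simp only [h0, Finset.card_empty]
      rw [Finset.sum_congr rfl (fun i _ => by rw [h1 i])]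
      simp
  · -- max welfare bundle S
    refine ⟨S, ?_, ?_⟩
    · have : ∀ p ∈ S, cost p = L / x := by
        intro p hp
        have : p ≠ last := (Finset.mem_erase.mp hp).1
        simp [hcost, this]
      unfold feas
      rw [Finset.sum_congr rfl this, Finset.sum_const, hScard, nsmul_eq_mul]
      have key : (x : ℝ) * (L / x) = L := by field_simp
      rw [key]
    · unfold SWr
      rw [Fin.sum_univ_succ]
      have h0 : A 0 ∩ S = S := by simp [hA]
      have h1 : ∀ i : Fin (m + 2), A i.succ ∩ S = ∅ := by
        intro i
        simp [hA, Fin.succ_ne_zero, hS]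
      simp only [h0, hScard]
      rw [Finset.sum_congr rfl (fun i _ => by rw [h1 i])]
      simp
  · -- welfare bound
    intro B hB
    unfold SWr
    rw [Fin.sum_univ_succ]
    have h1 : ∀ i : Fin (m + 2), A i.succ = {last} := by
      intro i; simp [hA, Fin.succ_ne_zero]
    rw [Finset.sum_congr rfl (fun i _ => by rw [h1 i])]
    by_cases hlB : last ∈ B
    · -- B = {last}, welfare = m+2 ≤ x
      have hB' : B = {last} := by
        by_contra hne
        have : ∃ q ∈ B, q ≠ last := by
          by_contra hq
          push_neg at hq
          exact hne (Finset.eq_singleton_iff_unique_mem.mpr ⟨hlB, hq⟩)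
        obtain ⟨q, hqB, hq⟩ := this
        have hqe : q ∈ B.erase last := Finset.mem_erase.mpr ⟨hq, hqB⟩
        have hsum : cost last + ∑ p ∈ B.erase last, cost p = ∑ p ∈ B, cost p :=
          Finset.add_sum_erase B cost hlB
        have hpos : 0 < ∑ p ∈ B.erase last, cost p := by
          refine Finset.sum_pos' (fun p hp => ?_) ⟨q, hqe, ?_⟩
          · rw [hcost]; dsimp only; split_ifs
            exacts [hL.le, hcmin.le]
          · simpa [hcost, hq] using hcmin
        have : L < ∑ p ∈ B, cost p := by
          rw [← hsum]
          have : cost last = L := by simp [hcost]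
          linarith
        exact absurd hB (not_le.mpr this)
      subst hB'
      have h0 : A 0 ∩ ({last} : Finset (Fin (x + 1))) = ∅ := by
        simp [hA, hS, Finset.eq_empty_iff_forall_notMem]
      simp only [h0, Finset.card_empty, Finset.inter_self, Finset.card_singleton]
      simp only [Nat.cast_zero, Nat.cast_one]
      have hmx : (m : ℝ) < (x : ℝ) - 1 := by
        have h1 : Real.log x < (x : ℝ) - 1 := by
          have := Real.log_lt_sub_one_of_pos hx0 (by exact_mod_cast (by omega : x ≠ 1))
          linarith
        have h2 : (m : ℝ) ≤ Real.log x := Nat.floor_le hlog0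
        linarith
      -- natural: m < x - 1 so m + 2 ≤ x... as reals m ≤ x - 2 since integers
      have hmx' : m + 2 ≤ x := by
        have : (m : ℝ) + 1 < (x : ℝ) := by linarith
        have : m + 1 < x := by exact_mod_cast this
        omega
      have : (0:ℝ) + (m + 2 : ℕ) ≤ (x : ℝ) := by
        rw [zero_add]; exact_mod_cast hmx'
      calc (0:ℝ) + ∑ _i : Fin (m + 2), (1:ℝ) = (0:ℝ) + (m + 2 : ℕ) := by
            simp
        _ ≤ (x : ℝ) := this
    · have h2 : ∀ i : Fin (m + 2),
          ((({last} : Finset (Fin (x+1))) ∩ B).card : ℝ) = 0 := by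
        intro i
        simp [Finset.singleton_inter_of_notMem hlB]
      rw [Finset.sum_congr rfl (fun i _ => h2 i)]
      simp only [Finset.sum_const, smul_zero, add_zero]
      have : (A 0 ∩ B).card ≤ x := by
        calc (A 0 ∩ B).card ≤ (A 0).card := Finset.card_le_card Finset.inter_subset_left
          _ = x := by rw [hA]; simpa using hScard
      exact_mod_cast this
  · -- final inequality
    have h1 : (L / x) / L = 1 / x := by field_simp
    have h2 : L / (L / x) = x := by field_simp
    rw [h1, h2]
    have h3 : (m : ℝ) + 2 ≤ Real.log x + 2 := by
      have := Nat.floor_le hlog0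
      linarith
    rw [one_div, inv_mul_eq_div]
    gcongr
end

section
/- For every N ≥ 3 there exists a PB instance with N voters such that any bundle satisfying EJR represents at most 1 voter, while some feasible bundle represents all N voters; hence the representation guarantee of any EJR rule is at most 1/(N−1), and combined with the trivial lower bound 1/N, the worst-case representation guarantee of EJR rules is Θ(1/N). -/
/-- Extended Justified Representation (EJR) for participatory budgeting. -/
def EJR {N M : ℕ} (A : Fin N → Finset (Fin M)) (cost : Fin M → ℝ) (L : ℝ)
    (B : Finset (Fin M)) : Prop :=
  ∀ (S : Finset (Fin N)) (T : Finset (Fin M)), S.Nonempty →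
    (∀ i ∈ S, T ⊆ A i) → (L / N) * S.card ≥ (∑ p ∈ T, cost p) →
    ∃ i ∈ S, T.card ≤ (A i ∩ B).card

/-- For every `N ≥ 3` and budget `L > 0` there is a PB instance with `N`
voters in which every feasible EJR bundle represents at most 1 voter while
some feasible bundle represents all `N` voters; hence the representation
ratio of any EJR rule on this instance is at most `1/(N-1)`. -/
theorem stmt13 (N : ℕ) (hN : 3 ≤ N) (L : ℝ) (hL : 0 < L) :
    ∃ (M : ℕ) (cost : Fin M → ℝ) (A : Fin N → Finset (Fin M)),
      (∀ B, feas cost L B → EJR A cost L B → RPr A B ≤ 1) ∧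
      (∃ B, feas cost L B ∧ RPr A B = (N : ℝ)) ∧
      (∀ B B', feas cost L B → EJR A cost L B →
        feas cost L B' → RPr A B' = (N : ℝ) →
        RPr A B / RPr A B' ≤ 1 / ((N : ℝ) - 1)) := by
  haveI : NeZero N := ⟨by omega⟩
  have hNr : (3 : ℝ) ≤ (N : ℝ) := by exact_mod_cast hN
  have hNpos : (0 : ℝ) < (N : ℝ) := by linarith
  set cost : Fin 3 → ℝ := ![L / (2 * N), L / (2 * N), L * (4 * N - 3) / (4 * N)] with hcost
  set A : Fin N → Finset (Fin 3) := fun i => if i = 0 then {0, 1} else {2} with hA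
  have hcost0 : cost 0 = L / (2 * N) := rfl
  have hcost1 : cost 1 = L / (2 * N) := rfl
  have hcost2 : cost 2 = L * (4 * N - 3) / (4 * N) := rfl
  -- main claim: any feasible EJR bundle has RPr ≤ 1 (in fact = 1)
  have key : ∀ B, feas cost L B → EJR A cost L B → RPr A B ≤ 1 := by
    intro B hfeas hejr
    obtain ⟨i, hiS, hcard⟩ := hejr {0} ({0, 1} : Finset (Fin 3))
      ⟨0, Finset.mem_singleton_self 0⟩
      (by intro i hi; simp only [Finset.mem_singleton] at hi; subst hi
          simp [hA])
      (by
        rw [Finset.sum_pair (by decide), hcost0, hcost1]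
        simp only [Finset.card_singleton, Nat.cast_one, mul_one]
        rw [← add_div]
        apply le_of_eq
        field_simp
        ring)
    simp only [Finset.mem_singleton] at hiS
    subst hiS
    simp only [hA, if_pos rfl] at hcard
    have hc01 : (({0, 1} : Finset (Fin 3)).card) = 2 := by decide
    rw [hc01] at hcard
    have hsub : ({0, 1} : Finset (Fin 3)) ∩ B ⊆ {0, 1} := Finset.inter_subset_left
    have heq : ({0, 1} : Finset (Fin 3)) ∩ B = {0, 1} := by
      apply Finset.eq_of_subset_of_card_le hsub
      rw [hc01]; exact hcard
    have h0B : (0 : Fin 3) ∈ B := by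
      have : (0 : Fin 3) ∈ ({0,1} : Finset (Fin 3)) ∩ B := by rw [heq]; decide
      exact (Finset.mem_inter.mp this).2
    have h1B : (1 : Fin 3) ∈ B := by
      have : (1 : Fin 3) ∈ ({0,1} : Finset (Fin 3)) ∩ B := by rw [heq]; decide
      exact (Finset.mem_inter.mp this).2
    have h2B : (2 : Fin 3) ∉ B := by
      intro h2B
      have hsub3 : ({0, 1, 2} : Finset (Fin 3)) ⊆ B := by
        intro x hx
        fin_cases hx <;> assumption
      have hcnn : ∀ p : Fin 3, 0 ≤ cost p := by
        intro p
        fin_cases p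
        · show 0 ≤ cost 0; rw [hcost0]; positivity
        · show 0 ≤ cost 1; rw [hcost1]; positivity
        · show 0 ≤ cost 2; rw [hcost2]
          have : (0:ℝ) ≤ 4 * N - 3 := by linarith
          positivity
      have hnn : ∀ p ∈ B, p ∉ ({0,1,2} : Finset (Fin 3)) → 0 ≤ cost p :=
        fun p _ _ => hcnn p
      have hge : ∑ p ∈ ({0,1,2} : Finset (Fin 3)), cost p ≤ ∑ p ∈ B, cost p :=
        Finset.sum_le_sum_of_subset_of_nonneg hsub3 hnn
      have huniv : ({0,1,2} : Finset (Fin 3)) = Finset.univ := by decide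
      rw [huniv, Fin.sum_univ_three, hcost0, hcost1, hcost2] at hge
      have hfeas' := hfeas
      unfold feas at hfeas'
      have : L / (2 * N) + L / (2 * N) + L * (4 * N - 3) / (4 * N) ≤ L := le_trans hge hfeas'
      field_simp at this
      nlinarith [mul_pos hL hNpos]
    -- now compute RPr
    unfold RPr
    have hterm : ∀ i : Fin N, i ≠ 0 → min 1 (((A i ∩ B).card : ℝ)) = 0 := by
      intro i hi
      simp only [hA, if_neg hi]
      rw [Finset.singleton_inter_of_notMem h2B]
      simp
    rw [Finset.sum_eq_single (0 : Fin N)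
      (fun i _ hi => hterm i hi) (fun h => absurd (Finset.mem_univ _) h)]
    simp only [hA, if_pos rfl, heq, hc01]
    norm_num
  refine ⟨3, cost, A, key, ?_, ?_⟩
  · -- B' = {0, 2} represents everyone
    refine ⟨{0, 2}, ?_, ?_⟩
    · unfold feas
      rw [Finset.sum_pair (by decide), hcost0, hcost2]
      rw [div_add_div _ _ (by positivity) (by positivity : (4:ℝ) * N ≠ 0)]
      rw [div_le_iff₀ (by positivity)]
      ring_nf
      nlinarith [mul_pos hL hNpos]
    · unfold RPr
      have hterm : ∀ i : Fin N, min 1 (((A i ∩ ({0,2} : Finset (Fin 3))).card : ℝ)) = 1 := by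
        intro i
        by_cases hi : i = 0
        · subst hi
          simp only [hA, if_pos rfl]
          norm_num [show ({0,1} : Finset (Fin 3)) ∩ {0,2} = {0} from by decide]
        · simp only [hA, if_neg hi]
          norm_num [show ({2} : Finset (Fin 3)) ∩ {0,2} = {2} from by decide]
      rw [Finset.sum_congr rfl (fun i _ => hterm i)]
      simp
  · intro B B' hf hejr hf' hR'
    have h1 : RPr A B ≤ 1 := key B hf hejr
    have h0 : 0 ≤ RPr A B := by
      unfold RPr
      apply Finset.sum_nonneg
      intro i _
      positivity
    rw [hR']
    rw [div_le_div_iff₀ hNpos (by linarith)]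
    nlinarith
end

section
/- For every N ≥ 4 there exists a PB instance with N voters in which every bundle satisfying EJR (together with budget exhaustion) has social welfare at most 2N − √N, while the maximum social welfare is at least ⌊√N⌋·N; hence the utilitarian ratio of any EJR rule on this instance is at most 4/√N − 1/N. -/
lemma card_filter_val_lt (M n : ℕ) (h : n ≤ M) :
    (Finset.univ.filter (fun p : Fin M => p.val < n)).card = n := by
  have he : Finset.univ.filter (fun p : Fin M => p.val < n)
      = Finset.map (Fin.castLEEmb h) Finset.univ := by
    ext p
    simp only [Finset.mem_filter, Finset.mem_univ, true_and, Finset.mem_map,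
      Fin.castLEEmb, Function.Embedding.coeFn_mk]
    constructor
    · intro hp; exact ⟨⟨p.val, hp⟩, rfl⟩
    · rintro ⟨a, ha, rfl⟩; exact a.isLt
  rw [he, Finset.card_map, Finset.card_univ, Fintype.card_fin]

/-- For every `N ≥ 4` and budget `L > 0` there is a PB instance with `N`
voters and `2N - ⌊√N⌋` projects in which every feasible budget-exhausting EJR
bundle has welfare at most `2N - √N`, while the maximum welfare is at least
`⌊√N⌋·N`; hence the utilitarian ratio of any EJR rule on this instance is at
most `4/√N - 1/N`. -/
theorem stmt14 (N : ℕ) (hN : 4 ≤ N) (L : ℝ) (hL : 0 < L) :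
    ∃ (cost : Fin (2 * N - Nat.sqrt N) → ℝ)
      (A : Fin N → Finset (Fin (2 * N - Nat.sqrt N))),
      (∀ B, feas cost L B → EJR A cost L B →
        (∀ p, p ∉ B → ¬ feas cost L (insert p B)) →
        SWr A B ≤ 2 * (N : ℝ) - Real.sqrt N) ∧
      (∃ B, feas cost L B ∧ (Nat.sqrt N : ℝ) * N ≤ SWr A B) ∧
      (∀ B B', feas cost L B → EJR A cost L B →
        (∀ p, p ∉ B → ¬ feas cost L (insert p B)) →
        feas cost L B' → (Nat.sqrt N : ℝ) * N ≤ SWr A B' →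
        SWr A B / SWr A B' ≤ 4 / Real.sqrt N - 1 / N) := by
  have hN1 : 1 < N := by omega
  set s := Nat.sqrt N with hs
  have hsN : s < N := Nat.sqrt_lt_self hN1
  have hs2 : 2 ≤ s := Nat.le_sqrt.mpr (by omega)
  have hss : s * s ≤ N := Nat.sqrt_le N
  have hss' : N < (s + 1) * (s + 1) := Nat.lt_succ_sqrt N
  have hNM : N ≤ 2 * N - s := by omega
  -- real facts about x = √N
  have hN0 : (0:ℝ) < N := by exact_mod_cast (by omega : 0 < N)
  set x := Real.sqrt N with hx
  have hx0 : 0 < x := Real.sqrt_pos.mpr hN0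
  have hxx : x * x = N := Real.mul_self_sqrt hN0.le
  have hs0 : (0:ℝ) ≤ (s:ℝ) := by positivity
  have hsx : (s:ℝ) ≤ x := by
    calc (s:ℝ) = Real.sqrt ((s:ℝ) * (s:ℝ)) := (Real.sqrt_mul_self hs0).symm
    _ ≤ x := Real.sqrt_le_sqrt (by exact_mod_cast hss)
  have hxs1 : x ≤ (s:ℝ) + 1 := by
    calc x ≤ Real.sqrt (((s:ℝ) + 1) * ((s:ℝ) + 1)) :=
          Real.sqrt_le_sqrt (by exact_mod_cast hss'.le)
    _ = (s:ℝ) + 1 := Real.sqrt_mul_self (by positivity)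
  have hx2 : (2:ℝ) ≤ x := by
    calc (2:ℝ) = Real.sqrt (2 * 2) := (Real.sqrt_mul_self (by norm_num)).symm
    _ ≤ x := Real.sqrt_le_sqrt (by exact_mod_cast (by norm_num : ((2:ℕ)*2 ≤ N) = (4 ≤ N)) ▸ hN)
  -- the instance
  set P : Finset (Fin (2 * N - s)) := Finset.univ.filter (fun p => p.val < N) with hP
  have hPcard : P.card = N := card_filter_val_lt _ _ hNM
  set q : Fin N → Fin (2 * N - s) := fun i =>
    ⟨N + (i.val - s), by have := i.isLt; omega⟩ with hq
  set A : Fin N → Finset (Fin (2 * N - s)) := fun i =>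
    if i.val < s then P else {q i} with hA
  set cost : Fin (2 * N - s) → ℝ := fun _ => L / N with hcost
  have hLN : 0 < L / N := div_pos hL hN0
  have hcostsum : ∀ B : Finset (Fin (2 * N - s)), ∑ p ∈ B, cost p = B.card * (L / N) := by
    intro B; rw [hcost]; rw [Finset.sum_const, nsmul_eq_mul]
  have hfeascard : ∀ B : Finset (Fin (2 * N - s)), feas cost L B → B.card ≤ N := by
    intro B h
    unfold feas at h
    rw [hcostsum] at h
    have hNL : (N:ℝ) * (L / N) = L := by field_simp
    have h' : (B.card : ℝ) * (L / N) ≤ (N:ℝ) * (L / N) := by rw [hNL]; exact h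
    have hcard : (B.card : ℝ) ≤ (N:ℝ) := le_of_mul_le_mul_right h' hLN
    exact_mod_cast hcard
  -- key part 1
  have key1 : ∀ B, feas cost L B → EJR A cost L B → SWr A B ≤ 2 * (N:ℝ) - x := by
    intro B hf he
    have hsing : ∀ i : Fin N, ¬ i.val < s → q i ∈ B := by
      intro i hi
      obtain ⟨j, hj, hcard⟩ := he {i} {q i} (Finset.singleton_nonempty i)
        (by intro j hj
            rw [Finset.mem_singleton] at hj
            subst hj
            rw [hA]
            simp only [if_neg hi]
            exact Finset.Subset.refl _)
        (by rw [Finset.sum_singleton, Finset.card_singleton, hcost]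
            simp)
      have hji : j = i := Finset.mem_singleton.mp hj
      rw [hji] at hcard
      rw [Finset.card_singleton] at hcard
      rw [hA] at hcard
      simp only [if_neg hi] at hcard
      have hne : ({q i} ∩ B).Nonempty := Finset.card_pos.mp (by omega)
      obtain ⟨p, hp⟩ := hne
      rw [Finset.mem_inter, Finset.mem_singleton] at hp
      rw [← hp.1]; exact hp.2
    -- Q ⊆ B
    set Q : Finset (Fin (2 * N - s)) := Finset.univ.filter (fun p => ¬ p.val < N) with hQ
    have hQsub : Q ⊆ B := by
      intro p hp
      rw [hQ, Finset.mem_filter] at hp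
      have hpv : N ≤ p.val := by omega
      have hplt := p.isLt
      have hi : s + (p.val - N) < N := by omega
      have := hsing ⟨s + (p.val - N), hi⟩ (by simp)
      have hqe : q ⟨s + (p.val - N), hi⟩ = p := by
        rw [hq]; apply Fin.ext; simp; omega
      rwa [hqe] at this
    have hQcard : Q.card = N - s := by
      have := Finset.card_filter_add_card_filter_not
        (s := (Finset.univ : Finset (Fin (2 * N - s)))) (p := fun p => p.val < N)
      rw [Finset.card_univ, Fintype.card_fin] at this
      rw [← hP, ← hQ] at this
      omega
    have hBcard := hfeascard B hf
    have hPB : (P ∩ B).card ≤ s := by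
      have hdisj : Disjoint (P ∩ B) Q := by
        rw [Finset.disjoint_left]
        intro p hp hpq
        rw [Finset.mem_inter, hP, Finset.mem_filter] at hp
        rw [hQ, Finset.mem_filter] at hpq
        exact hpq.2 hp.1.2
      have hsub : (P ∩ B) ∪ Q ⊆ B :=
        Finset.union_subset Finset.inter_subset_right hQsub
      have := Finset.card_le_card hsub
      rw [Finset.card_union_of_disjoint hdisj] at this
      omega
    -- sum bound
    have hterm : ∀ i : Fin N, ((A i ∩ B).card : ℝ) ≤ (if i.val < s then (s:ℝ) else 1) := by
      intro i
      by_cases h : i.val < s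
      · rw [if_pos h, hA]
        simp only [if_pos h]
        exact_mod_cast hPB
      · rw [if_neg h, hA]
        simp only [if_neg h]
        have h1 : ({q i} ∩ B).card ≤ 1 := by
          calc ({q i} ∩ B).card ≤ ({q i} : Finset _).card :=
                Finset.card_le_card Finset.inter_subset_left
          _ = 1 := Finset.card_singleton _
        exact_mod_cast h1
    have hsum : SWr A B ≤ ∑ i : Fin N, (if i.val < s then (s:ℝ) else 1) :=
      Finset.sum_le_sum (fun i _ => hterm i)
    rw [Finset.sum_ite, Finset.sum_const, Finset.sum_const] at hsum
    have hc1 : (Finset.univ.filter (fun i : Fin N => i.val < s)).card = s :=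
      card_filter_val_lt _ _ hsN.le
    have hc2 : (Finset.univ.filter (fun i : Fin N => ¬ i.val < s)).card = N - s := by
      have := Finset.card_filter_add_card_filter_not
        (s := (Finset.univ : Finset (Fin N))) (p := fun i => i.val < s)
      rw [Finset.card_univ, Fintype.card_fin] at this
      omega
    rw [hc1, hc2, nsmul_eq_mul, nsmul_eq_mul] at hsum
    have hcast : ((N - s : ℕ) : ℝ) = (N:ℝ) - s := by
      rw [Nat.cast_sub hsN.le]
    rw [hcast] at hsum
    -- now real arithmetic
    rcases Nat.lt_or_ge (s * s) N with hlt | hge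
    · have h1 : (s:ℝ) * s + 1 ≤ N := by exact_mod_cast hlt
      nlinarith [hxs1, hsum]
    · have heq : s * s = N := le_antisymm hss hge
      have hxe : x = (s:ℝ) := by
        rw [hx, show ((N:ℝ)) = (s:ℝ) * (s:ℝ) by exact_mod_cast heq.symm,
          Real.sqrt_mul_self hs0]
      have h1 : (s:ℝ) * s = N := by exact_mod_cast heq
      nlinarith [hsum]
  -- part 2 : bundle P
  have key2 : feas cost L P ∧ (s:ℝ) * N ≤ SWr A P := by
    constructor
    · unfold feas
      rw [hcostsum, hPcard]
      rw [mul_div_assoc']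
      rw [mul_comm, mul_div_assoc]
      have : (N:ℝ) / N = 1 := div_self (ne_of_gt hN0)
      rw [this, mul_one]
    · unfold SWr
      have hsubset : (Finset.univ.filter (fun i : Fin N => i.val < s)) ⊆ Finset.univ :=
        Finset.filter_subset _ _
      have hlow : ∑ i ∈ Finset.univ.filter (fun i : Fin N => i.val < s),
          ((A i ∩ P).card : ℝ) ≤ ∑ i : Fin N, ((A i ∩ P).card : ℝ) :=
        Finset.sum_le_sum_of_subset_of_nonneg hsubset (fun i _ _ => Nat.cast_nonneg _)
      have hval : ∑ i ∈ Finset.univ.filter (fun i : Fin N => i.val < s),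
          ((A i ∩ P).card : ℝ) = (s:ℝ) * N := by
        rw [Finset.sum_congr rfl (fun i hi => ?_), Finset.sum_const,
          card_filter_val_lt _ _ hsN.le, nsmul_eq_mul]
        rw [Finset.mem_filter] at hi
        rw [hA]
        simp only [if_pos hi.2, Finset.inter_self, hPcard]
      linarith [hlow, hval ▸ hlow]
  -- assemble
  refine ⟨cost, A, fun B hf he _ => key1 B hf he, ⟨P, key2⟩, ?_⟩
  intro B B' hf he hex hf' hW'
  have h1 := key1 B hf he
  have hW0 : 0 ≤ SWr A B := Finset.sum_nonneg (fun i _ => Nat.cast_nonneg _)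
  have hsR : (0:ℝ) < (s:ℝ) := by exact_mod_cast (by omega : 0 < s)
  have hsN0 : (0:ℝ) < (s:ℝ) * N := mul_pos hsR hN0
  have h2Nx : 0 ≤ 2 * (N:ℝ) - x := by
    have : (s:ℝ) ≤ N := by exact_mod_cast hsN.le
    linarith
  have hchain : SWr A B / SWr A B' ≤ (2 * (N:ℝ) - x) / ((s:ℝ) * N) :=
    div_le_div₀ h2Nx h1 hsN0 hW'
  have hcore : 2 * (N:ℝ) - x ≤ (4 * x - 1) * s := by
    have h41 : (0:ℝ) ≤ 4 * x - 1 := by linarith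
    have hmul := mul_le_mul_of_nonneg_left (show x - 1 ≤ (s:ℝ) by linarith) h41
    nlinarith [mul_nonneg (show (0:ℝ) ≤ x - 2 by linarith) hx0.le]
  have hstep : (2 * (N:ℝ) - x) / ((s:ℝ) * N) ≤ ((4 * x - 1) * s) / ((s:ℝ) * N) :=
    (div_le_div_iff_of_pos_right hsN0).mpr hcore
  have hsimp : ((4 * x - 1) * s) / ((s:ℝ) * N) = (4 * x - 1) / N := by
    rw [mul_comm (4 * x - 1) (s:ℝ), mul_div_mul_left _ _ (ne_of_gt hsR)]
  have h4 : 4 / x = 4 * x / N := by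
    rw [div_eq_div_iff hx0.ne' hN0.ne']; linear_combination (-4) * hxx
  have hfin : (4 * x - 1) / N = 4 / x - 1 / N := by
    rw [h4, sub_div]
  calc SWr A B / SWr A B' ≤ (2 * (N:ℝ) - x) / ((s:ℝ) * N) := hchain
  _ ≤ ((4 * x - 1) * s) / ((s:ℝ) * N) := hstep
  _ = (4 * x - 1) / N := hsimp
  _ = 4 / x - 1 / N := hfin
end

section
/- For every m ≥ 2 and x ≥ 1 there exists a PB instance with N = m·x + 1 voters, m² projects each of cost L/m, in which some welfare-maximal feasible bundle has representation x+1, while the maximum representation over feasible bundles is m·x + 1; hence the representation ratio of Approval Voting is at most (x+1)/(m·x+1) ≤ (c_min/L)(1 + 1/x) ≤ 2·c_min/L. -/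
namespace Stmt15Aux

def grp (m x : ℕ) (i : Fin (m*x+1)) : ℕ := min (i.val / x) (m-1)

def AA (m x : ℕ) (i : Fin (m*x+1)) : Finset (Fin (m*m)) :=
  Finset.univ.filter (fun p => p.val / m = grp m x i)

def Bproj (m g : ℕ) : Finset (Fin (m*m)) :=
  Finset.univ.filter (fun p => p.val / m = g)

def Vg (m x g : ℕ) : Finset (Fin (m*x+1)) :=
  Finset.univ.filter (fun i => grp m x i = g)

lemma grp_le (m x : ℕ) (i : Fin (m*x+1)) : grp m x i ≤ m - 1 := min_le_right _ _

lemma div_eq_iff (m g n : ℕ) (hm : 0 < m) : n / m = g ↔ g*m ≤ n ∧ n < g*m + m := by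
  have h1 := Nat.div_add_mod n m
  have h2 := Nat.mod_lt n hm
  constructor
  · intro h
    subst h
    have hc : (n/m) * m = m * (n/m) := Nat.mul_comm _ _
    omega
  · intro h
    rcases Nat.lt_trichotomy (n / m) g with hlt | heq | hgt
    · exfalso
      have h3 : (n/m + 1) * m ≤ g * m := Nat.mul_le_mul_right m (by omega)
      have h4 : (n/m + 1) * m = m * (n/m) + m := by ring
      omega
    · exact heq
    · exfalso
      have h3 : (g+1) * m ≤ (n/m) * m := Nat.mul_le_mul_right m (by omega)
      have h4 : (g+1) * m = g*m + m := by ring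
      have h5 : (n/m) * m = m * (n/m) := Nat.mul_comm _ _
      omega

lemma card_Bproj (m : ℕ) (hm : 0 < m) (g : ℕ) (hg : g < m) : (Bproj m g).card = m := by
  have key : (Bproj m g).card = (Finset.Ico (g*m) (g*m+m)).card := by
    refine Finset.card_bij' (fun p _ => p.val)
      (fun n hn => (⟨n, ?_⟩ : Fin (m*m))) ?_ ?_ ?_ ?_
    · simp only [Finset.mem_Ico] at hn
      have : g*m + m ≤ m*m := by
        have : (g+1)*m ≤ m*m := Nat.mul_le_mul_right m (by omega)
        have h4 : (g+1)*m = g*m+m := by ring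
        omega
      omega
    · intro p hp
      simp only [Bproj, Finset.mem_filter, Finset.mem_univ, true_and] at hp
      rw [div_eq_iff m g p.val hm] at hp
      simp only [Finset.mem_Ico]; omega
    · intro n hn
      simp only [Finset.mem_Ico] at hn
      simp only [Bproj, Finset.mem_filter, Finset.mem_univ, true_and]
      rw [div_eq_iff m g n hm]; exact hn
    · intro p _; rfl
    · intro n _; rfl
  rw [key, Nat.card_Ico]; omega

lemma grp_bounds (m x : ℕ) (hm : 2 ≤ m) (hx : 1 ≤ x) (i : Fin (m*x+1)) (g : ℕ)
    (h : grp m x i = g) : g*x ≤ i.val ∧ i.val < g*x + x + 1 := by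
  have hx0 : 0 < x := hx
  have hiN := i.isLt
  rw [grp] at h
  rcases le_total (i.val / x) (m-1) with hc | hc
  · have hg : i.val / x = g := by rw [min_eq_left hc] at h; exact h
    rw [div_eq_iff x g i.val hx0] at hg
    omega
  · have hg : m - 1 = g := by rw [min_eq_right hc] at h; exact h
    have hdiv : (m-1) * x ≤ i.val := by
      rw [← Nat.le_div_iff_mul_le hx0]; exact hc
    have hkey : (m-1)*x + x = m*x := by
      have h1 : m - 1 + 1 = m := by omega
      calc (m-1)*x + x = (m-1+1)*x := by ring
      _ = m*x := by rw [h1]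
    subst hg
    omega

lemma card_Vg_le (m x : ℕ) (hm : 2 ≤ m) (hx : 1 ≤ x) (g : ℕ) :
    (Vg m x g).card ≤ x + 1 := by
  have key : (Vg m x g).card ≤ (Finset.Ico (g*x) (g*x+x+1)).card := by
    apply Finset.card_le_card_of_injOn Fin.val
    · intro i hi
      simp only [Vg, Finset.mem_coe, Finset.mem_filter, Finset.mem_univ, true_and] at hi
      have := grp_bounds m x hm hx i g hi
      simp only [Finset.coe_Ico, Set.mem_Ico, Finset.mem_coe, Finset.mem_Ico]; omega
    · exact Fin.val_injective.injOn
  rw [Nat.card_Ico] at key; omega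

lemma card_Vg_top (m x : ℕ) (hm : 2 ≤ m) (hx : 1 ≤ x) :
    (Vg m x (m-1)).card = x + 1 := by
  have hx0 : 0 < x := hx
  have hkey : (m-1)*x + x = m*x := by
    have h1 : m - 1 + 1 = m := by omega
    calc (m-1)*x + x = (m-1+1)*x := by ring
    _ = m*x := by rw [h1]
  have key : (Vg m x (m-1)).card = (Finset.Ico ((m-1)*x) (m*x+1)).card := by
    refine Finset.card_bij' (fun i _ => i.val)
      (fun n hn => (⟨n, ?_⟩ : Fin (m*x+1))) ?_ ?_ ?_ ?_
    · simp only [Finset.mem_Ico] at hn; omega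
    · intro i hi
      simp only [Vg, Finset.mem_filter, Finset.mem_univ, true_and] at hi
      have := grp_bounds m x hm hx i (m-1) hi
      simp only [Finset.mem_Ico]; omega
    · intro n hn
      simp only [Finset.mem_Ico] at hn
      simp only [Vg, Finset.mem_filter, Finset.mem_univ, true_and, grp]
      have hdiv : m - 1 ≤ n / x := by
        rw [Nat.le_div_iff_mul_le hx0]; exact hn.1
      exact Finset.mem_filter.2 ⟨Finset.mem_univ _, min_eq_right hdiv⟩
    · intro i _; rfl
    · intro n _; rfl
  rw [key, Nat.card_Ico]; omega

end Stmt15Aux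


open Stmt15Aux

/-- For every `m ≥ 2`, `x ≥ 1` and budget `L > 0` there is a PB instance with
`m·x + 1` voters and `m²` projects, each of cost `L/m`, in which some
welfare-maximal feasible bundle has representation `x + 1` while the maximum
representation over feasible bundles is `m·x + 1`; hence the representation
ratio of Approval Voting is at most
`(x+1)/(m·x+1) ≤ (cmin/L)(1 + 1/x) ≤ 2·cmin/L` with `cmin = L/m`. -/
theorem stmt15 (m x : ℕ) (hm : 2 ≤ m) (hx : 1 ≤ x) (L : ℝ) (hL : 0 < L) :
    ∃ (A : Fin (m * x + 1) → Finset (Fin (m * m)))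
      (cost : Fin (m * m) → ℝ),
      (∀ p, cost p = L / m) ∧
      (∃ B, feas cost L B ∧
        (∀ B', feas cost L B' → SWr A B' ≤ SWr A B) ∧
        RPr A B = (x : ℝ) + 1) ∧
      (∀ B, feas cost L B → RPr A B ≤ (m : ℝ) * x + 1) ∧
      (∃ B, feas cost L B ∧ RPr A B = (m : ℝ) * x + 1) ∧
      (((x : ℝ) + 1) / ((m : ℝ) * x + 1) ≤ ((L / m) / L) * (1 + 1 / x)) ∧
      (((L / m) / L) * (1 + 1 / (x : ℝ)) ≤ 2 * (L / m) / L) := by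
  have hm0 : 0 < m := by omega
  have hmR : (0:ℝ) < m := by exact_mod_cast hm0
  have hxR : (1:ℝ) ≤ x := by exact_mod_cast hx
  have hLm : (0:ℝ) < L / m := div_pos hL hmR
  have hxN : 0 < x := hx
  -- feasibility criterion
  have feas_iff : ∀ B : Finset (Fin (m*m)),
      feas (fun _ => L / m) L B ↔ B.card ≤ m := by
    intro B
    have h1 : feas (fun _ => L / m) L B ↔ (B.card : ℝ) * (L/m) ≤ (m:ℝ) * (L/m) := by
      rw [feas, Finset.sum_const, nsmul_eq_mul,
        show (m:ℝ) * (L/m) = L from by field_simp]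
    rw [h1, mul_le_mul_iff_of_pos_right hLm, Nat.cast_le]
  -- welfare as a natural number
  have hSW : ∀ B : Finset (Fin (m*m)),
      SWr (AA m x) B = ((∑ i, ((AA m x i ∩ B).card) : ℕ) : ℝ) := by
    intro B; rw [SWr]; push_cast; rfl
  -- key counting identity
  have hcount : ∀ B : Finset (Fin (m*m)),
      (∑ i, ((AA m x i ∩ B).card)) = ∑ p ∈ B, (Vg m x (p.val / m)).card := by
    intro B
    have h1 : ∀ i, (AA m x i ∩ B).card
        = ∑ p ∈ B, if grp m x i = p.val / m then 1 else 0 := by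
      intro i
      have h2 : AA m x i ∩ B = B.filter (fun p => grp m x i = p.val / m) := by
        ext p
        simp only [AA, Finset.mem_inter, Finset.mem_filter, Finset.mem_univ, true_and]
        constructor
        · rintro ⟨h3, h4⟩; exact ⟨h4, h3.symm⟩
        · rintro ⟨h3, h4⟩; exact ⟨h4.symm, h3⟩
      rw [h2, Finset.card_filter]
    calc (∑ i, ((AA m x i ∩ B).card))
        = ∑ i, ∑ p ∈ B, if grp m x i = p.val / m then 1 else 0 := by
          exact Finset.sum_congr rfl (fun i _ => h1 i)
      _ = ∑ p ∈ B, ∑ i, (if grp m x i = p.val / m then 1 else 0) := Finset.sum_comm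
      _ = ∑ p ∈ B, (Vg m x (p.val / m)).card := by
          refine Finset.sum_congr rfl (fun p _ => ?_)
          rw [Vg, Finset.card_filter]
  -- the big group's bundle
  set B0 : Finset (Fin (m*m)) := Bproj m (m-1) with hB0
  have hcardB0 : B0.card = m := card_Bproj m hm0 (m-1) (by omega)
  have hinterB0 : ∀ i, (AA m x i ∩ B0).card = if grp m x i = m-1 then m else 0 := by
    intro i
    by_cases hgi : grp m x i = m-1
    · rw [if_pos hgi]
      have h2 : AA m x i ∩ B0 = B0 := by
        ext p
        simp only [AA, hB0, Bproj, Finset.mem_inter, Finset.mem_filter,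
          Finset.mem_univ, true_and, hgi]
        tauto
      rw [h2, hcardB0]
    · rw [if_neg hgi, Finset.card_eq_zero]
      ext p
      simp only [AA, hB0, Bproj, Finset.mem_inter, Finset.mem_filter,
        Finset.mem_univ, true_and, Finset.notMem_empty, iff_false, not_and]
      intro h3 h4
      exact hgi (h3 ▸ h4)
  have hSWB0 : (∑ i, ((AA m x i ∩ B0).card)) = (x+1) * m := by
    calc (∑ i, ((AA m x i ∩ B0).card))
        = ∑ i, (if grp m x i = m-1 then m else 0) := by
          exact Finset.sum_congr rfl (fun i _ => hinterB0 i)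
      _ = ∑ i ∈ Finset.univ.filter (fun i => grp m x i = m-1), m := by
          rw [Finset.sum_filter]
      _ = (Vg m x (m-1)).card * m := by rw [Finset.sum_const, smul_eq_mul]; rfl
      _ = (x+1) * m := by rw [card_Vg_top m x hm hx]
  -- the one-per-group bundle
  have hlt : ∀ g : Fin m, g.val * m < m * m := by
    intro g
    have h1 : (g.val+1) * m ≤ m * m := Nat.mul_le_mul_right m g.isLt
    have h2 : (g.val+1) * m = g.val*m + m := by ring
    omega
  set B1 : Finset (Fin (m*m)) :=
    Finset.univ.image (fun g : Fin m => (⟨g.val * m, hlt g⟩ : Fin (m*m))) with hB1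
  have hcardB1 : B1.card = m := by
    rw [hB1, Finset.card_image_of_injective _ ?_, Finset.card_univ, Fintype.card_fin]
    intro a b hab
    have h1 : a.val * m = b.val * m := by
      simpa [Fin.ext_iff] using hab
    exact Fin.ext (Nat.eq_of_mul_eq_mul_right hm0 h1)
  have hB1ne : ∀ i, (AA m x i ∩ B1).Nonempty := by
    intro i
    have hg : grp m x i < m := by have := grp_le m x i; omega
    refine ⟨⟨grp m x i * m, hlt ⟨grp m x i, hg⟩⟩, ?_⟩
    refine Finset.mem_inter.2 ⟨?_, ?_⟩
    · simp only [AA, Finset.mem_filter, Finset.mem_univ, true_and]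
      exact Nat.mul_div_cancel _ hm0
    · rw [hB1]
      exact Finset.mem_image.2 ⟨⟨grp m x i, hg⟩, Finset.mem_univ _, rfl⟩
  refine ⟨AA m x, fun _ => L / m, fun _ => rfl, ?_, ?_, ?_, ?_, ?_⟩
  · -- welfare-maximal bundle B0 with representation x+1
    refine ⟨B0, (feas_iff B0).2 (le_of_eq hcardB0), ?_, ?_⟩
    · intro B' hB'
      rw [hSW, hSW, hcount B', hSWB0, Nat.cast_le]
      have hcard' : B'.card ≤ m := (feas_iff B').1 hB'
      calc ∑ p ∈ B', (Vg m x (p.val / m)).card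
          ≤ ∑ _p ∈ B', (x+1) :=
            Finset.sum_le_sum (fun p _ => card_Vg_le m x hm hx _)
        _ = B'.card * (x+1) := by rw [Finset.sum_const, smul_eq_mul]
        _ ≤ m * (x+1) := Nat.mul_le_mul_right _ hcard'
        _ = (x+1) * m := Nat.mul_comm _ _
    · rw [RPr]
      have h1 : ∀ i : Fin (m*x+1), min 1 (((AA m x i ∩ B0).card : ℝ))
          = if grp m x i = m-1 then 1 else 0 := by
        intro i
        rw [hinterB0 i]
        by_cases h : grp m x i = m-1
        · rw [if_pos h, if_pos h]
          exact min_eq_left (by exact_mod_cast hm0)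
        · rw [if_neg h, if_neg h]; simp
      rw [Finset.sum_congr rfl (fun i _ => h1 i), Finset.sum_boole]
      have : (Finset.univ.filter fun i => grp m x i = m-1) = Vg m x (m-1) := rfl
      rw [this, card_Vg_top m x hm hx]
      push_cast; ring
  · -- representation is always at most m*x+1
    intro B _
    rw [RPr]
    calc ∑ i : Fin (m*x+1), min 1 (((AA m x i ∩ B).card : ℝ))
        ≤ ∑ _i : Fin (m*x+1), (1:ℝ) :=
          Finset.sum_le_sum (fun i _ => min_le_left _ _)
      _ = ((m*x+1 : ℕ) : ℝ) := by
          rw [Finset.sum_const, Finset.card_univ, Fintype.card_fin, nsmul_eq_mul, mul_one]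
      _ = (m:ℝ) * x + 1 := by push_cast; ring
  · -- B1 attains m*x+1
    refine ⟨B1, (feas_iff B1).2 (le_of_eq hcardB1), ?_⟩
    rw [RPr]
    have h1 : ∀ i : Fin (m*x+1), min 1 (((AA m x i ∩ B1).card : ℝ)) = 1 := by
      intro i
      have h2 : 0 < (AA m x i ∩ B1).card := Finset.card_pos.2 (hB1ne i)
      exact min_eq_left (by exact_mod_cast h2)
    rw [Finset.sum_congr rfl (fun i _ => h1 i), Finset.sum_const, Finset.card_univ,
      Fintype.card_fin, nsmul_eq_mul, mul_one]
    push_cast; ring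
  · -- first inequality
    have hLL : (L/m)/L = 1/m := by field_simp
    rw [hLL, show (1/(m:ℝ)) * (1 + 1/x) = ((x:ℝ)+1)/((m:ℝ)*x) from by
      field_simp]
    rw [div_le_div_iff₀ (by nlinarith) (by nlinarith)]
    nlinarith
  · -- second inequality
    have hLL : (L/m)/L = 1/m := by field_simp
    have hLL2 : 2*(L/m)/L = (1/m)*2 := by field_simp
    rw [hLL, hLL2]
    have h1x : 1/(x:ℝ) ≤ 1 := by
      rw [div_le_one (by linarith)]; exact hxR
    have : (0:ℝ) ≤ 1/m := by positivity
    nlinarith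
end
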